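/- arXiv:1005.2558 — 3 statements merged into one kernel-verified Lean document; each statement's English description precedes it below -/
import Mathlib

section
/- Let R be a commutative ring, a ∈ R, and c ∈ R with c^p - a·c = 0 (p prime). Then the polynomial identity Z^p - a·Z = Z·∏_{i=0}^{p-2}(Z - ξ^i·c) in R[Z], where ξ is an element of multiplicative order p-1 (e.g. in Z_p^× mapped to R), holds if and only if a = c^{p-1}. -/
open Polynomial

lemma my_scaleRoots_X_sub_C {S : Type*} [CommRing S] [Nontrivial S] (b c : S) :
    ((X : S[X]) - C b).scaleRoots c = X - C (b * c) := by
  ext n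
  simp only [coeff_scaleRoots, natDegree_X_sub_C, coeff_sub, coeff_X, coeff_C]
  rcases n with _ | _ | n <;> simp [mul_comm]

lemma my_scaleRoots_prod {S : Type*} [CommRing S] [Nontrivial S] {ι : Type*}
    (s : Finset ι) (f : ι → S) (c : S) :
    (∏ i ∈ s, ((X : S[X]) - C (f i))).scaleRoots c = ∏ i ∈ s, (X - C (f i * c)) := by
  classical
  induction s using Finset.induction_on with
  | empty => simp [one_scaleRoots]
  | insert _ _ h ih =>
      rw [Finset.prod_insert h, Finset.prod_insert h, mul_scaleRoots', ih,
        my_scaleRoots_X_sub_C]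
      rw [(monic_X_sub_C _).leadingCoeff, (monic_prod_of_monic _ _
        (fun i _ => monic_X_sub_C (f i))).leadingCoeff, one_mul]
      exact one_ne_zero

lemma my_scaleRoots_X_pow_sub_one {S : Type*} [CommRing S] [Nontrivial S]
    (n : ℕ) (hn : 0 < n) (c : S) :
    ((X : S[X]) ^ n - C 1).scaleRoots c = X ^ n - C (c ^ n) := by
  ext m
  simp only [coeff_scaleRoots, natDegree_X_pow_sub_C, coeff_sub, coeff_X_pow, coeff_C]
  by_cases h1 : m = n
  · subst h1; simp [hn.ne']
  · by_cases h0 : m = 0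
    · subst h0; simp [if_neg h1]
    · simp [h1, h0]

/-- Let `R` be a commutative `ℤ_p`-algebra, `a, c ∈ R` with `c^p − a·c = 0` (`p` prime),
and let `ξ ∈ ℤ_p^×` be an element of multiplicative order `p − 1` (whose image in `R`
is used). Then the polynomial identity
`Z^p − a·Z = Z·∏_{i=0}^{p−2} (Z − ξ^i·c)` in `R[Z]` holds if and only if
`a = c^{p−1}`. -/
theorem oort_tate_generator_iff (p : ℕ) [Fact p.Prime] (R : Type*) [CommRing R]
    [Algebra ℤ_[p] R] (a c : R) (ξ : ℤ_[p]ˣ) (hξ : orderOf ξ = p - 1)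
    (hc : c ^ p - a * c = 0) :
    ((X : R[X]) ^ p - C a * X =
        X * ∏ i ∈ Finset.range (p - 1),
          (X - C (algebraMap ℤ_[p] R ((ξ : ℤ_[p]) ^ i) * c))) ↔
      a = c ^ (p - 1) := by
  rcases subsingleton_or_nontrivial R with hR | hR
  · constructor <;> intro _ <;> exact Subsingleton.elim _ _
  set n := p - 1 with hn_def
  have hp : p.Prime := Fact.out
  have hn : 0 < n := by have := hp.two_le; omega
  have hpn : p = n + 1 := by have := hp.two_le; omega
  have hord : orderOf ((ξ : ℤ_[p])) = n := by rw [orderOf_units, hξ]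
  have hprim : IsPrimitiveRoot ((ξ : ℤ_[p])) n := hord ▸ IsPrimitiveRoot.orderOf _
  have base : ((X : ℤ_[p][X]) ^ n - C 1) =
      ∏ i ∈ Finset.range n, (X - C ((ξ : ℤ_[p]) ^ i * 1)) :=
    X_pow_sub_C_eq_prod hprim hn (one_pow n)
  simp only [mul_one] at base
  have hmap := congrArg (Polynomial.map (algebraMap ℤ_[p] R)) base
  simp only [Polynomial.map_sub, Polynomial.map_pow, map_X, map_C, Polynomial.map_prod,
    Polynomial.map_one, map_one] at hmap
  rw [← C_1] at hmap
  have key : ∏ i ∈ Finset.range n, ((X : R[X]) - C (algebraMap ℤ_[p] R ((ξ : ℤ_[p]) ^ i) * c))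
      = X ^ n - C (c ^ n) := by
    rw [← my_scaleRoots_prod, ← hmap, my_scaleRoots_X_pow_sub_one n hn c]
  rw [key]
  constructor
  · intro h
    have hX : (X : R[X]) ^ p = X * X ^ n := by rw [hpn, pow_succ]; ring
    have h2 : (C a : R[X]) * X = C (c ^ n) * X := by linear_combination hX - h
    have h3 := congrArg (fun q => coeff q 1) h2
    simpa only [coeff_C_mul, coeff_X_one, mul_one] using h3
  · rintro rfl
    rw [hpn, pow_succ]
    ring
end

section
/- In the extended affine Weyl group W̃ = X_*(T) ⋊ W of GL_d with T the diagonal torus, an element w = t_{e_m}·w̄ (with w̄ ∈ S_d) belongs to the μ₀-admissible set Adm(μ₀) for μ₀ = (1,0,…,0) if and only if w̄ is a cycle of the form (m_k m_{k-1} ⋯ m_1) with m = m_k > m_{k-1} > ⋯ > m_1. -/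
/-! Extended affine Weyl group `W̃ = ℤ^d ⋊ S_d` of `GL_d`, with the Bruhat order
defined via the base alcove contained in the antidominant Weyl chamber. -/

noncomputable section

/-- An element `t_λ ⋅ w̄` of the extended affine Weyl group `ℤ^d ⋊ S_d` of `GL_d`. -/
@[ext]
structure AffW (d : ℕ) where
  t : Fin d → ℤ
  w : Equiv.Perm (Fin d)

namespace AffW

variable {d : ℕ}

instance : Mul (AffW d) := ⟨fun a b => ⟨fun i => a.t i + b.t (a.w⁻¹ i), a.w * b.w⟩⟩
instance : One (AffW d) := ⟨⟨0, 1⟩⟩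

/-- The translation element `t_λ`. -/
def transl (lam : Fin d → ℤ) : AffW d := ⟨lam, 1⟩

/-- An element of the finite Weyl group `S_d`, viewed in the extended affine Weyl group. -/
def finW (w : Equiv.Perm (Fin d)) : AffW d := ⟨0, w⟩

/-- The permutation action of the finite Weyl group on (co)weights. -/
def pact (w : Equiv.Perm (Fin d)) (v : Fin d → ℤ) : Fin d → ℤ := fun i => v (w⁻¹ i)

/-- The affine action of the extended affine Weyl group on `ℚ^d`. -/
def act (x : AffW d) (v : Fin d → ℚ) : Fin d → ℚ := fun i => (x.t i : ℚ) + v (x.w⁻¹ i)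

/-- The affine action on the coweight lattice `ℤ^d`. -/
def actZ (x : AffW d) (v : Fin d → ℤ) : Fin d → ℤ := fun i => x.t i + v (x.w⁻¹ i)

/-- The barycenter of the base alcove `{v : v_0 < v_1 < ⋯ < v_{d-1} < v_0 + 1}`,
which is contained in the antidominant Weyl chamber. -/
def base (d : ℕ) : Fin d → ℚ := fun i => -(((d : ℚ) - 1 - (i : ℚ)) / (d : ℚ))

/-- The affine root hyperplane `v_i - v_j = k` separates the base alcove from its
transform under `x`. -/
def Separates (x : AffW d) (i j : Fin d) (k : ℤ) : Prop :=
  (base d i - base d j - (k : ℚ)) * (act x (base d) i - act x (base d) j - (k : ℚ)) < 0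

/-- The length of `x`, relative to a set of roots singled out by the relation `R`
(for `GL_d` itself take `R = ⊤`; for a Levi `M`, `R i j` means `e_i - e_j` is a root
of `M`): the number of affine root hyperplanes separating the base alcove from its
transform under `x`. -/
noncomputable def lenR (R : Fin d → Fin d → Prop) (x : AffW d) : ℕ :=
  Set.ncard {p : Fin d × Fin d × ℤ | p.1 < p.2.1 ∧ R p.1 p.2.1 ∧ Separates x p.1 p.2.1 p.2.2}

/-- The length function on the extended affine Weyl group of `GL_d`. -/
noncomputable def len (x : AffW d) : ℕ := lenR (fun _ _ => True) x

/-- Affine reflections (in hyperplanes `v_i - v_j = k` with `R i j`). -/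
def IsReflR (R : Fin d → Fin d → Prop) (r : AffW d) : Prop :=
  ∃ (i j : Fin d) (k : ℤ), i ≠ j ∧ R i j ∧ r.w = Equiv.swap i j ∧
    r.t = k • (Pi.single i (1 : ℤ) - Pi.single j 1)

/-- Affine reflections for `GL_d`. -/
def IsRefl (r : AffW d) : Prop := IsReflR (fun _ _ => True) r

/-- The Bruhat order (relative to `R`): `x ≤ y` iff `x` is obtained from `y` by
successive right multiplications by affine reflections, each strictly decreasing
the length. -/
def bleR (R : Fin d → Fin d → Prop) (x y : AffW d) : Prop :=
  Relation.ReflTransGen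
    (fun u v => (∃ r, IsReflR R r ∧ u = v * r) ∧ lenR R u < lenR R v) x y

/-- The Bruhat order on the extended affine Weyl group of `GL_d`, defined via the
base alcove in the antidominant chamber. -/
def ble (x y : AffW d) : Prop := bleR (fun _ _ => True) x y

/-- The `μ`-admissible set `Adm(μ) = { x : x ≤ t_λ for some λ ∈ Wμ }`. -/
def Adm (μ : Fin d → ℤ) : Set (AffW d) :=
  {x | ∃ σ : Equiv.Perm (Fin d), ble x (transl (pact σ μ))}

/-- The Drinfeld coweight `μ₀ = (1,0,…,0)`. -/
def mu0 (d : ℕ) [NeZero d] : Fin d → ℤ := Pi.single 0 1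

/-- The set of critical indices `S(w) = { j : w ≤ t_{e_j} }`. -/
def crit (x : AffW d) : Set (Fin d) := {j | ble x (transl (Pi.single j 1))}

/-- The length-zero element `τ = t_{e_d} ⋅ (d d−1 ⋯ 1)` of `Adm(μ₀)`. -/
def tau (d : ℕ) [NeZero d] : AffW d :=
  transl (Pi.single (Fin.ofNat d (d - 1 : ℕ)) 1) * finW (List.finRange d).reverse.formPerm

/-- The negative `ω̄_j = -ω_j` of the `j`-th fundamental coweight of `GL_d`. -/
def omb (d j : ℕ) : Fin d → ℤ := fun i => if (i : ℕ) < j then -1 else 0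

-- ================== my additions ==================

def flr (x : AffW d) (i j : Fin d) : ℤ :=
  x.t i - x.t j - (if (x.w⁻¹ i) < (x.w⁻¹ j) then 1 else 0)

lemma base_sub (i j : Fin d) : base d i - base d j = ((i : ℚ) - (j : ℚ)) / d := by
  have hd : (d : ℚ) ≠ 0 := by
    have : 0 < d := i.pos
    positivity
  field_simp [base]
  simp only [base]
  field_simp
  ring

lemma flr_lt_act (x : AffW d) {i j : Fin d} (hij : i ≠ j) :
    (flr x i j : ℚ) < act x (base d) i - act x (base d) j ∧
      act x (base d) i - act x (base d) j < flr x i j + 1 := by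
  have hd : (0:ℚ) < d := by exact_mod_cast i.pos
  have hy : act x (base d) i - act x (base d) j
      = ((x.t i : ℚ) - x.t j) + (((x.w⁻¹ i : Fin d) : ℚ) - ((x.w⁻¹ j : Fin d) : ℚ)) / d := by
    simp only [act, base_sub]
    rw [show ((x.t i : ℚ) + base d (x.w⁻¹ i)) - ((x.t j : ℚ) + base d (x.w⁻¹ j))
        = ((x.t i : ℚ) - x.t j) + (base d (x.w⁻¹ i) - base d (x.w⁻¹ j)) by ring, base_sub]
  have hne : x.w⁻¹ i ≠ x.w⁻¹ j := fun h => hij (x.w⁻¹.injective h)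
  have hb1 : (((x.w⁻¹ i : Fin d) : ℕ) : ℚ) < d := by exact_mod_cast (x.w⁻¹ i).isLt
  have hb2 : (((x.w⁻¹ j : Fin d) : ℕ) : ℚ) < d := by exact_mod_cast (x.w⁻¹ j).isLt
  rcases lt_or_gt_of_ne hne with h | h
  · have hlt : ((x.w⁻¹ i : Fin d) : ℕ) < ((x.w⁻¹ j : Fin d) : ℕ) := h
    have h1 : (((x.w⁻¹ i : Fin d) : ℕ) : ℚ) < (((x.w⁻¹ j : Fin d) : ℕ) : ℚ) := by exact_mod_cast hlt
    simp only [flr, if_pos h]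
    constructor
    · rw [hy]; push_cast
      have : (-1 : ℚ) < ((((x.w⁻¹ i : Fin d) : ℕ) : ℚ) - (((x.w⁻¹ j : Fin d) : ℕ) : ℚ)) / d := by
        rw [lt_div_iff₀ hd]
        have : (0:ℚ) ≤ (((x.w⁻¹ i : Fin d) : ℕ) : ℚ) := by positivity
        nlinarith
      push_cast at this ⊢
      linarith
    · rw [hy]; push_cast
      have : ((((x.w⁻¹ i : Fin d) : ℕ) : ℚ) - (((x.w⁻¹ j : Fin d) : ℕ) : ℚ)) / d < 0 := by
        apply div_neg_of_neg_of_pos _ hd; linarith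
      push_cast at this ⊢
      linarith
  · have hlt : ((x.w⁻¹ j : Fin d) : ℕ) < ((x.w⁻¹ i : Fin d) : ℕ) := h
    have h1 : (((x.w⁻¹ j : Fin d) : ℕ) : ℚ) < (((x.w⁻¹ i : Fin d) : ℕ) : ℚ) := by exact_mod_cast hlt
    simp only [flr, if_neg (not_lt_of_gt h)]
    constructor
    · rw [hy]; push_cast
      have : (0:ℚ) < ((((x.w⁻¹ i : Fin d) : ℕ) : ℚ) - (((x.w⁻¹ j : Fin d) : ℕ) : ℚ)) / d := by
        apply div_pos _ hd; linarith
      push_cast at this ⊢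
      linarith
    · rw [hy]; push_cast
      have : ((((x.w⁻¹ i : Fin d) : ℕ) : ℚ) - (((x.w⁻¹ j : Fin d) : ℕ) : ℚ)) / d < 1 := by
        rw [div_lt_iff₀ hd]
        have : (0:ℚ) ≤ (((x.w⁻¹ j : Fin d) : ℕ) : ℚ) := by positivity
        nlinarith
      push_cast at this ⊢
      linarith

lemma sep_iff (x : AffW d) {i j : Fin d} (hij : i < j) (k : ℤ) :
    Separates x i j k ↔ (0 ≤ k ∧ k ≤ flr x i j) ∨ (flr x i j + 1 ≤ k ∧ k ≤ -1) := by
  have hd : (0:ℚ) < d := by exact_mod_cast i.pos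
  have hane : i ≠ j := ne_of_lt hij
  obtain ⟨hy1, hy2⟩ := flr_lt_act x hane
  have hij' : ((i : Fin d) : ℕ) < ((j : Fin d) : ℕ) := hij
  have ha1 : (-1 : ℚ) < base d i - base d j := by
    rw [base_sub, lt_div_iff₀ hd]
    have h1 : ((j : ℕ) : ℚ) < d := by exact_mod_cast j.isLt
    have h2 : (0:ℚ) ≤ ((i : ℕ) : ℚ) := by positivity
    push_cast
    nlinarith
  have ha2 : base d i - base d j < 0 := by
    rw [base_sub]
    apply div_neg_of_neg_of_pos _ hd
    have : ((i : ℕ) : ℚ) < ((j : ℕ) : ℚ) := by exact_mod_cast hij'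
    push_cast
    linarith
  unfold Separates
  rw [mul_neg_iff]
  constructor
  · rintro (⟨h1, h2⟩ | ⟨h1, h2⟩)
    · -- a - k > 0 (k ≤ -1), y - k < 0 (k ≥ F+1)
      right
      constructor
      · by_contra hc
        push_neg at hc
        have : (k : ℚ) ≤ flr x i j := by exact_mod_cast Int.lt_add_one_iff.mp hc
        linarith
      · by_contra hc
        push_neg at hc
        have : (0 : ℚ) ≤ (k:ℚ) := by exact_mod_cast hc
        linarith
    · left
      constructor
      · by_contra hc
        push_neg at hc
        have : (k : ℚ) ≤ -1 := by exact_mod_cast Int.lt_add_one_iff.mp (by omega : k < 0)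
        linarith
      · by_contra hc
        push_neg at hc
        have : ((flr x i j : ℚ)) + 1 ≤ (k:ℚ) := by exact_mod_cast hc
        linarith
  · rintro (⟨h1, h2⟩ | ⟨h1, h2⟩)
    · right
      have h1' : (0:ℚ) ≤ (k:ℚ) := by exact_mod_cast h1
      have h2' : (k:ℚ) ≤ flr x i j := by exact_mod_cast h2
      constructor <;> linarith
    · left
      have h1' : ((flr x i j : ℚ)) + 1 ≤ (k:ℚ) := by exact_mod_cast h1
      have h2' : (k:ℚ) ≤ -1 := by exact_mod_cast h2
      constructor <;> linarith

lemma flr_abs_le (x : AffW d) (i j : Fin d) (hij : i ≠ j) :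
    (flr x i j).natAbs ≤ (∑ l, (x.t l).natAbs) + 1 := by
  have h2 : (x.t i).natAbs + (x.t j).natAbs ≤ ∑ l, (x.t l).natAbs := by
    have h := Finset.sum_le_sum_of_subset (f := fun l => (x.t l).natAbs)
      (Finset.subset_univ ({i, j} : Finset (Fin d)))
    rwa [Finset.sum_pair hij] at h
  simp only [flr]
  split_ifs <;> omega

lemma len_eq (x : AffW d) :
    len x = ∑ ij : Fin d × Fin d,
      (if ij.1 < ij.2 then (flr x ij.1 ij.2 + 1).natAbs else 0) := by
  classical
  set B : ℤ := ((∑ l, (x.t l).natAbs : ℕ) : ℤ) + 1 with hB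
  set T := (Finset.univ ×ˢ Finset.univ ×ˢ Finset.Icc (-B) B).filter
      (fun p : Fin d × Fin d × ℤ => p.1 < p.2.1 ∧
        ((0 ≤ p.2.2 ∧ p.2.2 ≤ flr x p.1 p.2.1) ∨
          (flr x p.1 p.2.1 + 1 ≤ p.2.2 ∧ p.2.2 ≤ -1))) with hT
  have hset : {p : Fin d × Fin d × ℤ | p.1 < p.2.1 ∧ (fun _ _ => True) p.1 p.2.1 ∧
        Separates x p.1 p.2.1 p.2.2} = ↑T := by
    ext ⟨i, j, k⟩
    simp only [hT, Set.mem_setOf_eq, Finset.mem_coe, Finset.mem_filter, Finset.mem_product,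
      Finset.mem_univ, Finset.mem_Icc, true_and]
    constructor
    · rintro ⟨h1, h3⟩
      have hs := (sep_iff x h1 k).mp h3
      have hb := flr_abs_le x i j (ne_of_lt h1)
      exact ⟨by omega, h1, hs⟩
    · rintro ⟨-, h1, h3⟩
      exact ⟨h1, (sep_iff x h1 k).mpr h3⟩
  have hlen : len x = T.card := by
    rw [len, lenR, hset, Set.ncard_coe_finset]
  rw [hlen, hT, Finset.card_filter, Finset.sum_product, Fintype.sum_prod_type]
  apply Finset.sum_congr rfl
  intro i _
  rw [Finset.sum_product]
  apply Finset.sum_congr rfl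
  intro j _
  by_cases hij : i < j
  · simp only [hij, true_and, if_true]
    rw [← Finset.sum_filter]
    have hb := flr_abs_le x i j (ne_of_lt hij)
    have heq : (Finset.Icc (-B) B).filter
        (fun k => (0 ≤ k ∧ k ≤ flr x i j) ∨ (flr x i j + 1 ≤ k ∧ k ≤ -1))
        = (Finset.Icc 0 (flr x i j)) ∪ (Finset.Icc (flr x i j + 1) (-1)) := by
      ext k
      simp only [Finset.mem_filter, Finset.mem_Icc, Finset.mem_union]
      omega
    have hdisj : Disjoint (Finset.Icc 0 (x.flr i j)) (Finset.Icc (x.flr i j + 1) (-1)) := by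
      rw [Finset.disjoint_left]
      intro k hk1 hk2
      simp only [Finset.mem_Icc] at hk1 hk2
      omega
    rw [heq, ← Finset.card_eq_sum_ones, Finset.card_union_of_disjoint hdisj]
    simp only [Int.card_Icc]
    omega
  · simp only [hij, false_and, if_false, Finset.sum_const_zero]

/-- The affine reflection across `v_α - v_β = k`, as explicit element. -/
def rfl0 (α β : Fin d) (k : ℤ) : AffW d :=
  ⟨fun i => k * ((if i = α then 1 else 0) - (if i = β then 1 else 0)), Equiv.swap α β⟩

lemma mul_t (a b : AffW d) (i : Fin d) : (a * b).t i = a.t i + b.t (a.w⁻¹ i) := rfl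
lemma mul_w (a b : AffW d) : (a * b).w = a.w * b.w := rfl

lemma winv_eq_iff (v : AffW d) {i α : Fin d} : v.w⁻¹ i = α ↔ i = v.w α := by
  constructor
  · intro h; rw [← h]; simp
  · intro h; rw [h]; simp

lemma mul_rfl0_winv (v : AffW d) (α β : Fin d) (k : ℤ) (i : Fin d) :
    (v * rfl0 α β k).w⁻¹ i = v.w⁻¹ (Equiv.swap (v.w α) (v.w β) i) := by
  rw [mul_w]
  show (v.w * Equiv.swap α β)⁻¹ i = _
  rw [mul_inv_rev, Equiv.Perm.mul_apply]
  by_cases hip : i = v.w α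
  · subst hip
    rw [Equiv.swap_apply_left]
    simp [Equiv.swap_inv, Equiv.swap_apply_left]
  · by_cases hiq : i = v.w β
    · subst hiq
      rw [Equiv.swap_apply_right]
      simp [Equiv.swap_inv, Equiv.swap_apply_right]
    · rw [Equiv.swap_apply_of_ne_of_ne hip hiq]
      have h1 : v.w⁻¹ i ≠ α := fun h => hip (winv_eq_iff v |>.mp h)
      have h2 : v.w⁻¹ i ≠ β := fun h => hiq (winv_eq_iff v |>.mp h)
      rw [Equiv.swap_inv, Equiv.swap_apply_of_ne_of_ne h1 h2]

lemma mul_rfl0_t (v : AffW d) {α β : Fin d} (hαβ : α ≠ β) (k : ℤ) (i : Fin d) :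
    (v * rfl0 α β k).t i = v.t (Equiv.swap (v.w α) (v.w β) i)
      + (k + v.t (v.w α) - v.t (v.w β)) *
        ((if i = v.w α then 1 else 0) - (if i = v.w β then 1 else 0)) := by
  have hwαβ : v.w α ≠ v.w β := fun h => hαβ (v.w.injective h)
  rw [mul_t]
  show v.t i + (rfl0 α β k).t (v.w⁻¹ i) = _
  by_cases hip : i = v.w α
  · subst hip
    have h1 : v.w⁻¹ (v.w α) = α := by simp
    rw [Equiv.swap_apply_left]
    simp only [rfl0, h1, if_pos rfl, if_neg hαβ, if_neg hwαβ, if_true, eq_self_iff_true]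
    ring
  · by_cases hiq : i = v.w β
    · subst hiq
      have h1 : v.w⁻¹ (v.w β) = β := by simp
      rw [Equiv.swap_apply_right]
      simp only [rfl0, h1, if_neg (Ne.symm hαβ), if_neg (Ne.symm hwαβ), if_pos rfl, if_true, eq_self_iff_true]
      ring
    · rw [Equiv.swap_apply_of_ne_of_ne hip hiq]
      have h1 : v.w⁻¹ i ≠ α := fun h => hip (winv_eq_iff v |>.mp h)
      have h2 : v.w⁻¹ i ≠ β := fun h => hiq (winv_eq_iff v |>.mp h)
      simp only [rfl0, if_neg h1, if_neg h2, if_neg hip, if_neg hiq]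
      ring

lemma flr_mul_rfl0 (v : AffW d) {α β : Fin d} (hαβ : α ≠ β) (k : ℤ) (i j : Fin d) :
    flr (v * rfl0 α β k) i j
      = flr v (Equiv.swap (v.w α) (v.w β) i) (Equiv.swap (v.w α) (v.w β) j)
        + (k + v.t (v.w α) - v.t (v.w β)) *
          (((if i = v.w α then 1 else 0) - (if i = v.w β then 1 else 0))
            - ((if j = v.w α then 1 else 0) - (if j = v.w β then 1 else 0))) := by
  simp only [flr, mul_rfl0_t v hαβ k, mul_rfl0_winv]
  ring

lemma flr_add_flr (x : AffW d) {i j : Fin d} (hij : i ≠ j) :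
    flr x i j + flr x j i = -1 := by
  have hne : x.w⁻¹ i ≠ x.w⁻¹ j := fun h => hij (x.w⁻¹.injective h)
  simp only [flr]
  rcases lt_or_gt_of_ne hne with h | h
  · rw [if_pos h, if_neg (not_lt_of_gt h)]; ring
  · rw [if_neg (not_lt_of_gt h), if_pos h]; ring

lemma flr_triangle (x : AffW d) {i j γ : Fin d} (hij : i ≠ j) (hjγ : j ≠ γ) (hiγ : i ≠ γ) :
    flr x i j + flr x j γ ≤ flr x i γ ∧ flr x i γ ≤ flr x i j + flr x j γ + 1 := by
  have h1 : x.w⁻¹ i ≠ x.w⁻¹ j := fun h => hij (x.w⁻¹.injective h)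
  have h2 : x.w⁻¹ j ≠ x.w⁻¹ γ := fun h => hjγ (x.w⁻¹.injective h)
  have h3 : x.w⁻¹ i ≠ x.w⁻¹ γ := fun h => hiγ (x.w⁻¹.injective h)
  simp only [flr, Fin.lt_def]
  have e1 := Fin.val_ne_of_ne h1
  have e2 := Fin.val_ne_of_ne h2
  have e3 := Fin.val_ne_of_ne h3
  split_ifs <;> omega

def gfun (p q i : Fin d) : ℤ := (if i = p then 1 else 0) - (if i = q then 1 else 0)

lemma gfun_p {p q : Fin d} (h : p ≠ q) : gfun p q p = 1 := by simp [gfun, h]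
lemma gfun_q {p q : Fin d} (h : p ≠ q) : gfun p q q = -1 := by simp [gfun, h.symm]
lemma gfun_other {p q i : Fin d} (h1 : i ≠ p) (h2 : i ≠ q) : gfun p q i = 0 := by
  simp [gfun, h1, h2]

lemma gfun_swap {p q : Fin d} (h : p ≠ q) (i : Fin d) :
    gfun p q (Equiv.swap p q i) = - gfun p q i := by
  by_cases h1 : i = p
  · subst h1; rw [Equiv.swap_apply_left, gfun_q h, gfun_p h]
  · by_cases h2 : i = q
    · subst h2; rw [Equiv.swap_apply_right, gfun_p h, gfun_q h]; ring
    · rw [Equiv.swap_apply_of_ne_of_ne h1 h2, gfun_other h1 h2]; ring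

lemma flr_mul_rfl0' (v : AffW d) {α β : Fin d} (hαβ : α ≠ β) (k : ℤ) (i j : Fin d) :
    flr (v * rfl0 α β k) i j
      = flr v (Equiv.swap (v.w α) (v.w β) i) (Equiv.swap (v.w α) (v.w β) j)
        + (k + v.t (v.w α) - v.t (v.w β)) *
          (gfun (v.w α) (v.w β) i - gfun (v.w α) (v.w β) j) := by
  rw [flr_mul_rfl0 v hαβ k]
  simp only [gfun]

lemma sum_decomp {p q : Fin d} (hpq : p ≠ q) (f : Fin d → Fin d → ℤ)
    (h0 : ∀ i j, i ≠ p → i ≠ q → j ≠ p → j ≠ q → f i j = 0)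
    (hd : ∀ i, f i i = 0) :
    ∑ i, ∑ j, f i j
      = f p q + f q p + ∑ γ ∈ Finset.univ \ {p, q}, (f p γ + f γ p + f q γ + f γ q) := by
  have hpair : ∀ g : Fin d → ℤ,
      ∑ i, g i = g p + g q + ∑ γ ∈ Finset.univ \ {p, q}, g γ := by
    intro g
    have hsub : ({p, q} : Finset (Fin d)) ⊆ Finset.univ := Finset.subset_univ _
    rw [← Finset.sum_sdiff hsub, Finset.sum_pair hpq]
    ring
  have hmem : ∀ γ ∈ Finset.univ \ ({p, q} : Finset (Fin d)), γ ≠ p ∧ γ ≠ q := by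
    intro γ hγ
    simp only [Finset.mem_sdiff, Finset.mem_insert, Finset.mem_singleton] at hγ
    exact ⟨fun h => hγ.2 (Or.inl h), fun h => hγ.2 (Or.inr h)⟩
  have h1 := hpair (fun i => ∑ j, f i j)
  simp only at h1
  rw [h1, hpair (f p), hpair (f q)]
  have h2 : ∀ γ ∈ Finset.univ \ ({p, q} : Finset (Fin d)), ∑ j, f γ j = f γ p + f γ q := by
    intro γ hγ
    obtain ⟨hγp, hγq⟩ := hmem γ hγ
    rw [hpair (f γ)]
    have h3 : ∑ γ' ∈ Finset.univ \ ({p, q} : Finset (Fin d)), f γ γ' = 0 := by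
      apply Finset.sum_eq_zero
      intro γ' hγ'
      obtain ⟨hγ'p, hγ'q⟩ := hmem γ' hγ'
      by_cases h : γ' = γ
      · subst h; exact hd γ'
      · exact h0 γ γ' hγp hγq hγ'p hγ'q
    rw [h3]
    ring
  rw [Finset.sum_congr rfl h2, hd p, hd q]
  simp only [Finset.sum_add_distrib]
  ring

lemma len_lt_of_nonsep (v : AffW d) {α β : Fin d} (k : ℤ) (hαβ : α ≠ β)
    (hpq : v.w α < v.w β)
    (hns : (k + v.t (v.w α) - v.t (v.w β) ≤ -1
              ∧ k + v.t (v.w α) - v.t (v.w β) ≤ flr v (v.w α) (v.w β))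
         ∨ (0 ≤ k + v.t (v.w α) - v.t (v.w β)
              ∧ flr v (v.w α) (v.w β) + 1 ≤ k + v.t (v.w α) - v.t (v.w β))) :
    len v < len (v * rfl0 α β k) := by
  classical
  have hpqne : v.w α ≠ v.w β := ne_of_lt hpq
  set p := v.w α with hp
  set q := v.w β with hq
  set k' := k + v.t p - v.t q with hk'
  set s := Equiv.swap p q with hs
  have hsp : s p = q := Equiv.swap_apply_left p q
  have hsq : s q = p := Equiv.swap_apply_right p q
  have hso : ∀ i, i ≠ p → i ≠ q → s i = i := fun i h1 h2 => Equiv.swap_apply_of_ne_of_ne h1 h2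
  have hss : ∀ i, s (s i) = i := fun i => Equiv.swap_apply_self p q i
  have hlenu : len (v * rfl0 α β k) = ∑ ij : Fin d × Fin d,
      (if s ij.1 < s ij.2 then (flr v ij.1 ij.2 - k' * (gfun p q ij.1 - gfun p q ij.2) + 1).natAbs
        else 0) := by
    rw [len_eq]
    apply Fintype.sum_equiv (s.prodCongr s)
    intro ij
    simp only [Equiv.prodCongr_apply, Prod.map]
    rw [flr_mul_rfl0' v hαβ k, ← hp, ← hq, ← hs, ← hk']
    rw [hss ij.1, hss ij.2, gfun_swap hpqne ij.1, gfun_swap hpqne ij.2]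
    have harg : flr v (s ij.1) (s ij.2) + k' * (gfun p q ij.1 - gfun p q ij.2)
        = flr v (s ij.1) (s ij.2) - k' * (-gfun p q ij.1 - -gfun p q ij.2) := by ring
    rw [harg]
  have hlenv := len_eq v
  have hu' : (len (v * rfl0 α β k) : ℤ) = ∑ i, ∑ j,
      (if s i < s j then ((flr v i j - k' * (gfun p q i - gfun p q j) + 1).natAbs : ℤ) else 0) := by
    rw [hlenu, Fintype.sum_prod_type]
    push_cast
    rfl
  have hv' : (len v : ℤ) = ∑ i, ∑ j, (if i < j then ((flr v i j + 1).natAbs : ℤ) else 0) := by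
    rw [hlenv, Fintype.sum_prod_type]
    push_cast
    rfl
  set D : Fin d → Fin d → ℤ := fun i j =>
    (if s i < s j then ((flr v i j - k' * (gfun p q i - gfun p q j) + 1).natAbs : ℤ) else 0)
      - (if i < j then ((flr v i j + 1).natAbs : ℤ) else 0) with hD
  have hdiff : (len (v * rfl0 α β k) : ℤ) - (len v : ℤ) = ∑ i, ∑ j, D i j := by
    rw [hu', hv', ← Finset.sum_sub_distrib]
    apply Finset.sum_congr rfl
    intro i _
    rw [← Finset.sum_sub_distrib]
  have h0 : ∀ i j, i ≠ p → i ≠ q → j ≠ p → j ≠ q → D i j = 0 := by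
    intro i j h1 h2 h3 h4
    simp only [hD, hso i h1 h2, hso j h3 h4, gfun_other h1 h2, gfun_other h3 h4,
      sub_self, mul_zero, sub_zero]
  have hdiag : ∀ i, D i i = 0 := by
    intro i
    simp only [hD, lt_self_iff_false, if_false, sub_self]
  have hD1 : 1 ≤ D p q + D q p := by
    have ha := flr_add_flr v hpqne
    simp only [hD, hsp, hsq, gfun_p hpqne, gfun_q hpqne,
      if_pos hpq, if_neg (not_lt_of_gt hpq)]
    ring_nf
    omega
  have hD2 : ∀ γ, γ ≠ p → γ ≠ q → 0 ≤ D p γ + D γ p + D q γ + D γ q := by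
    intro γ hγp hγq
    have a1 := flr_add_flr v (Ne.symm hγp)
    have a2 := flr_add_flr v (Ne.symm hγq)
    have a3 := flr_add_flr v hpqne
    have t1 := flr_triangle v (i := p) (j := γ) (γ := q) (Ne.symm hγp) hγq hpqne
    have t2 := flr_triangle v (i := γ) (j := p) (γ := q) hγp hpqne hγq
    have t3 := flr_triangle v (i := p) (j := q) (γ := γ) hpqne (Ne.symm hγq) (Ne.symm hγp)
    have hpqv : (p : Fin d).val < (q : Fin d).val := hpq
    simp only [hD, hsp, hsq, hso γ hγp hγq, gfun_p hpqne, gfun_q hpqne,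
      gfun_other hγp hγq, sub_zero, zero_sub, sub_neg_eq_add, zero_add, mul_one, mul_neg_one,
      Fin.lt_def]
    split_ifs <;> omega
  have hsum2 : 0 ≤ ∑ γ ∈ Finset.univ \ ({p, q} : Finset (Fin d)),
      (D p γ + D γ p + D q γ + D γ q) := by
    apply Finset.sum_nonneg
    intro γ hγ
    simp only [Finset.mem_sdiff, Finset.mem_insert, Finset.mem_singleton] at hγ
    push_neg at hγ
    exact hD2 γ hγ.2.1 hγ.2.2
  have hdec := sum_decomp hpqne D h0 hdiag
  have hfin : (len v : ℤ) < (len (v * rfl0 α β k) : ℤ) := by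
    rw [hdec] at hdiff
    linarith
  exact_mod_cast hfin

/-- Vertexwise permissibility for `μ₀`. -/
def Pv (x : AffW d) : Prop := ∀ j : ℕ, j < d → ∃ m : Fin d, ∀ i : Fin d,
  x.t i + omb d j (x.w⁻¹ i) = omb d j i + (if i = m then 1 else 0)

lemma omb_range (j : ℕ) (γ : Fin d) : -1 ≤ omb d j γ ∧ omb d j γ ≤ 0 := by
  simp only [omb]; split_ifs <;> omega

lemma omb_mono (j : ℕ) {γ δ : Fin d} (h : (γ : ℕ) ≤ (δ : ℕ)) :
    omb d j γ ≤ omb d j δ := by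
  simp only [omb]; split_ifs with h1 h2 <;> omega

lemma rfl0_symm (α β : Fin d) (k : ℤ) : rfl0 α β k = rfl0 β α (-k) := by
  unfold rfl0
  ext i
  · simp only
    ring
  · simp only [Equiv.swap_comm]

lemma kr_step_aux (v : AffW d) {α β : Fin d} (k : ℤ) (hαβ : α ≠ β)
    (hpq : v.w α < v.w β) (hPv : Pv v)
    (hlen : len (v * rfl0 α β k) < len v) : Pv (v * rfl0 α β k) := by
  classical
  have hpqne : v.w α ≠ v.w β := ne_of_lt hpq
  have hsep : (0 ≤ k + v.t (v.w α) - v.t (v.w β)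
        ∧ k + v.t (v.w α) - v.t (v.w β) ≤ flr v (v.w α) (v.w β))
      ∨ (flr v (v.w α) (v.w β) + 1 ≤ k + v.t (v.w α) - v.t (v.w β)
        ∧ k + v.t (v.w α) - v.t (v.w β) ≤ -1) := by
    by_contra hc
    push_neg at hc
    have hns : (k + v.t (v.w α) - v.t (v.w β) ≤ -1
              ∧ k + v.t (v.w α) - v.t (v.w β) ≤ flr v (v.w α) (v.w β))
         ∨ (0 ≤ k + v.t (v.w α) - v.t (v.w β)
              ∧ flr v (v.w α) (v.w β) + 1 ≤ k + v.t (v.w α) - v.t (v.w β)) := by omega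
    exact absurd (len_lt_of_nonsep v k hαβ hpq hns) (by omega)
  have hf₂ : flr v (v.w α) (v.w β) = v.t (v.w α) - v.t (v.w β)
      - (if α < β then 1 else 0) := by
    simp only [flr, Equiv.Perm.coe_inv, Equiv.symm_apply_apply]
  intro j hj
  obtain ⟨m, hm⟩ := hPv j hj
  have e1 := hm (v.w α)
  have e2 := hm (v.w β)
  rw [Equiv.Perm.coe_inv, Equiv.symm_apply_apply] at e1 e2
  -- the displacement integer
  set cj : ℤ := omb d j α - omb d j β - k with hcj
  -- the transformation formula for the vertex vector
  have hexpr : ∀ i : Fin d, (v * rfl0 α β k).t i + omb d j ((v * rfl0 α β k).w⁻¹ i)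
      = (omb d j i + (if i = m then 1 else 0))
        - cj * (if i = v.w α then 1 else 0) + cj * (if i = v.w β then 1 else 0) := by
    intro i
    rw [← hm i]
    rw [mul_t, mul_rfl0_winv]
    by_cases hip : i = v.w α
    · subst hip
      rw [Equiv.swap_apply_left, Equiv.Perm.coe_inv, Equiv.symm_apply_apply, Equiv.symm_apply_apply]
      simp only [rfl0, if_pos rfl, if_neg hαβ, if_neg hpqne, if_true, eq_self_iff_true]
      ring
    · by_cases hiq : i = v.w β
      · subst hiq
        rw [Equiv.swap_apply_right, Equiv.Perm.coe_inv, Equiv.symm_apply_apply, Equiv.symm_apply_apply]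
        simp only [rfl0, if_neg (Ne.symm hαβ), if_pos rfl, if_neg (Ne.symm hpqne), if_true,
          eq_self_iff_true]
        ring
      · rw [Equiv.swap_apply_of_ne_of_ne hip hiq]
        have h1 : v.w⁻¹ i ≠ α := fun h => hip (winv_eq_iff v |>.mp h)
        have h2 : v.w⁻¹ i ≠ β := fun h => hiq (winv_eq_iff v |>.mp h)
        simp only [rfl0, if_neg h1, if_neg h2, if_neg hip, if_neg hiq]
        ring
  -- numeric facts
  have r1 := omb_range (d := d) j α
  have r2 := omb_range (d := d) j β
  have r3 := omb_range (d := d) j (v.w α)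
  have r4 := omb_range (d := d) j (v.w β)
  have hmono1 : omb d j (v.w α) ≤ omb d j (v.w β) := omb_mono j (le_of_lt hpq)
  have hαβv : (α : ℕ) ≠ (β : ℕ) := Fin.val_ne_of_ne hαβ
  have hmono2 : ((α : ℕ) < (β : ℕ) ∧ omb d j α ≤ omb d j β)
      ∨ ((β : ℕ) < (α : ℕ) ∧ omb d j β ≤ omb d j α) := by
    rcases Nat.lt_or_ge (α : ℕ) (β : ℕ) with h | h
    · exact Or.inl ⟨h, omb_mono j (le_of_lt h)⟩
    · exact Or.inr ⟨lt_of_le_of_ne h (Ne.symm hαβv), omb_mono j (by omega)⟩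
  simp only [Fin.lt_def] at hf₂
  by_cases hpm : v.w α = m <;> by_cases hqm : v.w β = m
  · exact absurd (hpm.trans hqm.symm) hpqne
  · -- m = w α ; possible c_j : 0 or 1
    rw [if_pos hpm] at e1
    rw [if_neg hqm] at e2
    have hcases : cj = 0 ∨ cj = 1 := by
      rcases hmono2 with ⟨h1, h2⟩ | ⟨h1, h2⟩
      · rw [if_pos h1] at hf₂
        omega
      · rw [if_neg (by omega)] at hf₂
        omega
    rcases hcases with hc | hc
    · exact ⟨m, fun i => by rw [hexpr i, hc]; ring⟩
    · exact ⟨v.w β, fun i => by rw [hexpr i, hc, hpm]; ring⟩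
  · -- m = w β ; possible c_j : 0 or -1
    rw [if_neg hpm] at e1
    rw [if_pos hqm] at e2
    have hcases : cj = 0 ∨ cj = -1 := by
      rcases hmono2 with ⟨h1, h2⟩ | ⟨h1, h2⟩
      · rw [if_pos h1] at hf₂
        omega
      · rw [if_neg (by omega)] at hf₂
        omega
    rcases hcases with hc | hc
    · exact ⟨m, fun i => by rw [hexpr i, hc]; ring⟩
    · exact ⟨v.w α, fun i => by rw [hexpr i, hc, hqm]; ring⟩
  · -- m ∉ {w α, w β} ; c_j = 0
    rw [if_neg hpm] at e1
    rw [if_neg hqm] at e2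
    have hc : cj = 0 := by
      rcases hmono2 with ⟨h1, h2⟩ | ⟨h1, h2⟩
      · rw [if_pos h1] at hf₂
        omega
      · rw [if_neg (by omega)] at hf₂
        omega
    exact ⟨m, fun i => by rw [hexpr i, hc]; ring⟩

lemma perm_eq_one (σ : Equiv.Perm (Fin d))
    (hall : ∀ i : Fin d, (i : ℕ) ≤ ((σ i : Fin d) : ℕ)) : σ = 1 := by
  have hsum : ∑ i : Fin d, (((σ i : Fin d) : ℕ) : ℤ) = ∑ i : Fin d, ((i : ℕ) : ℤ) :=
    Equiv.sum_comp σ (fun i => ((i : ℕ) : ℤ))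
  have hzero : ∑ i : Fin d, ((((σ i : Fin d) : ℕ) : ℤ) - ((i : ℕ) : ℤ)) = 0 := by
    rw [Finset.sum_sub_distrib, hsum]
    ring
  have hpt : ∀ i ∈ Finset.univ, (0:ℤ) ≤ (((σ i : Fin d) : ℕ) : ℤ) - ((i : ℕ) : ℤ) := by
    intro i _
    have := hall i
    omega
  have := (Finset.sum_eq_zero_iff_of_nonneg hpt).mp hzero
  apply Equiv.ext
  intro i
  have h := this i (Finset.mem_univ i)
  have : ((σ i : Fin d) : ℕ) = (i : ℕ) := by omega
  simpa [Fin.ext_iff] using this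

lemma sigma_min (σ : Equiv.Perm (Fin d)) (m : Fin d)
    (h1 : ∀ i : Fin d, i ≠ m → (i : ℕ) ≤ ((σ i : Fin d) : ℕ)) (hne : σ m ≠ m) :
    ((σ m : Fin d) : ℕ) ≤ ((σ⁻¹ m : Fin d) : ℕ) := by
  classical
  set S : Finset (Fin d) := Finset.univ.filter (fun i => σ i ≠ i) with hS
  have hmS : m ∈ S := by simp [hS, hne]
  have hSne : S.Nonempty := ⟨m, hmS⟩
  set m₀ := S.min' hSne with hm₀
  have hm₀S : m₀ ∈ S := S.min'_mem hSne
  have hm₀ne : σ m₀ ≠ m₀ := by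
    have := hm₀S
    simp [hS] at this
    exact this
  -- the preimage of the minimum must be m
  have hx : σ m = m₀ := by
    set x := σ⁻¹ m₀ with hxd
    have hσx : σ x = m₀ := Equiv.apply_symm_apply σ m₀
    have hxne : σ x ≠ x := by
      intro h
      apply hm₀ne
      have hxm0 : x = m₀ := h.symm.trans hσx
      rw [← hxm0]
      exact h
    have hxS : x ∈ S := by simp [hS, hxne]
    by_cases hxm : x = m
    · rw [← hxm]; exact hσx
    · exfalso
      have hge : (m₀ : ℕ) ≤ (x : ℕ) := by
        have := S.min'_le x hxS
        exact this
      have hle : ((σ x : Fin d) : ℕ) ≥ (x : ℕ) := h1 x hxm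
      rw [hσx] at hle
      have : (x : ℕ) = (m₀ : ℕ) := le_antisymm (by omega) hge
      have hxm₀ : x = m₀ := Fin.ext this
      exact hxne (hσx.trans hxm₀.symm)
  -- σ⁻¹ m is in the support, hence ≥ m₀
  have hb : σ (σ⁻¹ m) = m := Equiv.apply_symm_apply σ m
  have hbne : σ (σ⁻¹ m) ≠ σ⁻¹ m := by
    intro h
    apply hne
    have h2 : σ⁻¹ m = m := h.symm.trans hb
    rw [← h2]
    exact h
  have hbS : σ⁻¹ m ∈ S := by
    simp only [hS, Finset.mem_filter, Finset.mem_univ, true_and]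
    exact hbne
  have := S.min'_le _ hbS
  rw [hx]
  exact this

lemma perm_decomp_fix (m : Fin d) (σ : Equiv.Perm (Fin d))
    (h1 : ∀ i : Fin d, i ≠ m → (i : ℕ) ≤ ((σ i : Fin d) : ℕ)) (hfix : σ m = m) :
    σ⁻¹ = List.formPerm [m] := by
  have : σ = 1 := by
    apply perm_eq_one
    intro i
    by_cases him : i = m
    · subst him; rw [hfix]
    · exact h1 i him
  rw [this, List.formPerm_singleton]
  rfl

lemma perm_decomp (n : ℕ) : ∀ (m : Fin d) (σ : Equiv.Perm (Fin d)), (m : ℕ) ≤ n →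
    (∀ i : Fin d, i ≠ m → (i : ℕ) ≤ ((σ i : Fin d) : ℕ)) → ((σ m : Fin d) : ℕ) ≤ (m : ℕ) →
    ∃ l : List (Fin d), l ≠ [] ∧ l.Chain' (· > ·) ∧ l.head? = some m ∧ σ⁻¹ = l.formPerm := by
  induction n with
  | zero =>
    intro m σ hm h1 h2
    refine ⟨[m], by simp, List.isChain_singleton m, rfl, ?_⟩
    apply perm_decomp_fix m σ h1
    apply Fin.ext
    omega
  | succ n ih =>
    intro m σ hm h1 h2
    by_cases hfix : σ m = m
    · exact ⟨[m], by simp, List.isChain_singleton m, rfl, perm_decomp_fix m σ h1 hfix⟩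
    · set m' := σ⁻¹ m with hm'd
      have hσm' : σ m' = m := Equiv.apply_symm_apply σ m
      have hm'ne : m' ≠ m := by
        intro h
        rw [h] at hσm'
        exact hfix hσm'
      have hm'lt : (m' : ℕ) < (m : ℕ) := by
        have := h1 m' hm'ne
        rw [hσm'] at this
        rcases lt_or_eq_of_le this with h | h
        · exact h
        · exact absurd (Fin.ext h) hm'ne
      set σ' := σ * Equiv.swap m m' with hσ'd
      have hσ'm : σ' m = m := by
        rw [hσ'd]
        simp only [Equiv.Perm.mul_apply, Equiv.swap_apply_left]
        exact hσm'
      have hσ'm' : σ' m' = σ m := by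
        rw [hσ'd]
        simp only [Equiv.Perm.mul_apply, Equiv.swap_apply_right]
      have h1' : ∀ i : Fin d, i ≠ m' → (i : ℕ) ≤ ((σ' i : Fin d) : ℕ) := by
        intro i him'
        by_cases him : i = m
        · subst him
          rw [hσ'm]
        · rw [hσ'd]
          simp only [Equiv.Perm.mul_apply, Equiv.swap_apply_of_ne_of_ne him him']
          exact h1 i him
      have h2' : ((σ' m' : Fin d) : ℕ) ≤ (m' : ℕ) := by
        rw [hσ'm']
        exact sigma_min σ m h1 hfix
      obtain ⟨l', hl'ne, hl'ch, hl'hd, hl'fp⟩ := ih m' σ' (by omega) h1' h2'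
      rcases l' with _ | ⟨h₀, rest⟩
      · exact absurd rfl hl'ne
      · have hh₀ : h₀ = m' := by
          simpa using hl'hd
        subst hh₀
        refine ⟨m :: m' :: rest, by simp, ?_, rfl, ?_⟩
        · apply List.isChain_cons_cons.mpr
          exact ⟨Fin.lt_def.mpr hm'lt, hl'ch⟩
        · have hσinv : σ⁻¹ = Equiv.swap m m' * σ'⁻¹ := by
            rw [hσ'd, mul_inv_rev, Equiv.swap_inv, ← mul_assoc, Equiv.swap_mul_self, one_mul]
          rw [List.formPerm_cons_cons, ← hl'fp]
          exact hσinv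

lemma kr_step (v : AffW d) {α β : Fin d} (k : ℤ) (hαβ : α ≠ β) (hPv : Pv v)
    (hlen : len (v * rfl0 α β k) < len v) : Pv (v * rfl0 α β k) := by
  have hwne : v.w α ≠ v.w β := fun h => hαβ (v.w.injective h)
  rcases lt_or_gt_of_ne hwne with h | h
  · exact kr_step_aux v k hαβ h hPv hlen
  · rw [rfl0_symm α β k] at hlen ⊢
    exact kr_step_aux v (-k) (Ne.symm hαβ) h hPv hlen

lemma ext' {a b : AffW d} (ht : ∀ i, a.t i = b.t i) (hw : ∀ i, a.w i = b.w i) : a = b := by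
  ext i
  · exact ht i
  · exact congrArg Fin.val (hw i)

lemma mul_one' (a : AffW d) : a * ⟨0, 1⟩ = a := by
  apply ext'
  · intro i
    show a.t i + (0 : Fin d → ℤ) _ = a.t i
    simp
  · intro i
    show (a.w * 1) i = a.w i
    simp

lemma mul_assoc' (a b c : AffW d) : a * b * c = a * (b * c) := by
  apply ext'
  · intro i
    show (a.t i + b.t (a.w⁻¹ i)) + c.t ((a.w * b.w)⁻¹ i)
      = a.t i + (b.t (a.w⁻¹ i) + c.t (b.w⁻¹ (a.w⁻¹ i)))
    rw [mul_inv_rev, Equiv.Perm.mul_apply]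
    ring
  · intro i
    show (a.w * b.w * c.w) i = (a.w * (b.w * c.w)) i
    rw [mul_assoc]

lemma rfl0_mul_self {α β : Fin d} (h : α ≠ β) (k : ℤ) : rfl0 α β k * rfl0 α β k = ⟨0, 1⟩ := by
  apply ext'
  · intro i
    show (rfl0 α β k).t i + (rfl0 α β k).t ((Equiv.swap α β)⁻¹ i) = (0 : Fin d → ℤ) i
    rw [Equiv.swap_inv, Pi.zero_apply]
    by_cases hiα : i = α
    · subst hiα
      rw [Equiv.swap_apply_left]
      simp only [rfl0, if_pos rfl, if_neg h, if_neg (Ne.symm h)]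
      ring
    · by_cases hiβ : i = β
      · subst hiβ
        rw [Equiv.swap_apply_right]
        simp only [rfl0, if_pos rfl, if_neg h, if_neg (Ne.symm h)]
        ring
      · rw [Equiv.swap_apply_of_ne_of_ne hiα hiβ]
        simp only [rfl0, if_neg hiα, if_neg hiβ]
        ring
  · intro i
    show (Equiv.swap α β * Equiv.swap α β) i = (1 : Equiv.Perm (Fin d)) i
    rw [Equiv.swap_mul_self]

lemma rfl0_isrefl {α β : Fin d} (h : α ≠ β) (k : ℤ) :
    IsReflR (fun _ _ => True) (rfl0 α β k) := by
  refine ⟨α, β, k, h, trivial, rfl, ?_⟩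
  funext i
  simp only [rfl0, Pi.smul_apply, Pi.sub_apply, Pi.single_apply, smul_eq_mul]

lemma Pv_of_ble {x y : AffW d} (h : ble x y) (hy : Pv y) : Pv x := by
  induction h using Relation.ReflTransGen.head_induction_on with
  | refl => exact hy
  | head hstep htail ih =>
    obtain ⟨⟨r, hr, hequ⟩, hlt⟩ := hstep
    obtain ⟨α, β, k, hαβ, -, hw, ht⟩ := hr
    have hr0 : r = rfl0 α β k := by
      ext i
      · rw [ht]
        simp only [rfl0, Pi.smul_apply, Pi.sub_apply, Pi.single_apply, smul_eq_mul]
      · rw [hw]; rfl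
    rw [hequ, hr0]
    apply kr_step _ k hαβ ih
    rw [← hr0, ← hequ]
    exact hlt

lemma tw_t (lam : Fin d → ℤ) (w : Equiv.Perm (Fin d)) (i : Fin d) :
    (transl lam * finW w).t i = lam i := by
  show lam i + (0 : Fin d → ℤ) _ = lam i
  simp

lemma tw_w (lam : Fin d → ℤ) (w : Equiv.Perm (Fin d)) :
    (transl lam * finW w).w = w := by
  show (1 : Equiv.Perm (Fin d)) * w = w
  simp

lemma Pv_transl (lam : Fin d → ℤ) (m : Fin d) (hlam : ∀ i, lam i = if i = m then 1 else 0) :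
    Pv (transl lam) := by
  intro j hj
  refine ⟨m, fun i => ?_⟩
  have hw : (transl lam).w⁻¹ i = i := by
    show (1 : Equiv.Perm (Fin d))⁻¹ i = i
    simp
  show lam i + omb d j ((transl lam).w⁻¹ i) = _
  rw [hw, hlam i]
  ring

lemma Pv_struct {m : Fin d} {wb : Equiv.Perm (Fin d)}
    (hPv : Pv (transl (Pi.single m 1) * finW wb)) :
    (∀ i : Fin d, i ≠ m → (i : ℕ) ≤ ((wb⁻¹ i : Fin d) : ℕ))
      ∧ ((wb⁻¹ m : Fin d) : ℕ) ≤ (m : ℕ) := by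
  have hxt : ∀ i : Fin d, (transl (Pi.single m 1) * finW wb).t i = if i = m then 1 else 0 := by
    intro i
    rw [tw_t, Pi.single_apply]
  have hxw : ∀ i : Fin d, (transl (Pi.single m 1) * finW wb).w⁻¹ i = wb⁻¹ i := by
    intro i
    rw [tw_w]
  constructor
  · intro i him
    by_contra hc
    push_neg at hc
    set j : ℕ := ((wb⁻¹ i : Fin d) : ℕ) + 1 with hjd
    have hj : j < d := by
      have := i.isLt
      omega
    obtain ⟨mj, hmj⟩ := hPv j hj
    have heq := hmj i
    rw [hxt i, hxw i, if_neg him] at heq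
    have h1 : omb d j (wb⁻¹ i) = -1 := by
      simp only [omb, if_pos (show ((wb⁻¹ i : Fin d) : ℕ) < j by omega)]
    have h2 : omb d j i = 0 := by
      simp only [omb, if_neg (show ¬ ((i : Fin d) : ℕ) < j by omega)]
    rw [h1, h2] at heq
    split_ifs at heq <;> omega
  · by_contra hc
    push_neg at hc
    set j : ℕ := ((m : Fin d) : ℕ) + 1 with hjd
    have hj : j < d := by
      have := (wb⁻¹ m).isLt
      omega
    obtain ⟨mj, hmj⟩ := hPv j hj
    have heq := hmj m
    rw [hxt m, hxw m, if_pos rfl] at heq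
    have h1 : omb d j (wb⁻¹ m) = 0 := by
      simp only [omb, if_neg (show ¬ ((wb⁻¹ m : Fin d) : ℕ) < j by omega)]
    have h2 : omb d j m = -1 := by
      simp only [omb, if_pos (show ((m : Fin d) : ℕ) < j by omega)]
    rw [h1, h2] at heq
    split_ifs at heq <;> omega

lemma ble_list (l : List (Fin d)) : ∀ (m mlast : Fin d), l.Chain' (· > ·) →
    l.head? = some m → l.getLast? = some mlast →
    ble (transl (Pi.single m 1) * finW l.formPerm) (transl (Pi.single mlast 1)) := by
  induction l with
  | nil => intro m mlast _ hhd _; simp at hhd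
  | cons a l' ih =>
    intro m mlast hch hhd hlast
    have ham : a = m := by simpa using hhd
    subst ham
    rcases l' with _ | ⟨b, rest⟩
    · obtain rfl : a = mlast := by simpa using hlast
      have hx : transl (Pi.single a 1) * finW (List.formPerm [a]) = transl (Pi.single a 1) := by
        rw [List.formPerm_singleton]
        apply ext'
        · intro i
          rw [tw_t]
          rfl
        · intro i
          rw [tw_w]
          rfl
      rw [hx]
      exact Relation.ReflTransGen.refl
    · -- the inductive step: peel the head of the list
      have hch' : List.Chain' (· > ·) (b :: rest) := (List.isChain_cons_cons.mp hch).2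
      have hab : b < a := (List.isChain_cons_cons.mp hch).1
      have hpw : List.Pairwise (· > ·) (a :: b :: rest) := List.isChain_iff_pairwise.mp hch
      have hlta : ∀ c ∈ (b :: rest), c < a := fun c hc => (List.pairwise_cons.mp hpw).1 c hc
      have hnotmem : a ∉ (b :: rest) := fun h => lt_irrefl a (hlta a h)
      have hnodup : (a :: b :: rest).Nodup := hpw.imp (fun h => ne_of_gt h)
      have hnodup' : (b :: rest).Nodup := (List.nodup_cons.mp hnodup).2
      have hml : (b :: rest).getLast (List.cons_ne_nil b rest) = mlast := by
        have h2 := List.getLast?_eq_getLast (List.cons_ne_nil b rest)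
        rw [List.getLast?_cons_cons] at hlast
        rw [h2] at hlast
        exact Option.some.inj hlast
      have hmem : mlast ∈ (b :: rest) := hml ▸ List.getLast_mem _
      have hmlast_lt : mlast < a := hlta mlast hmem
      have hmlne : a ≠ mlast := ne_of_gt hmlast_lt
      have hbna : b ≠ a := ne_of_lt hab
      have hc'a : List.formPerm (b :: rest) a = a := List.formPerm_apply_of_notMem hnotmem
      have hc'ml : List.formPerm (b :: rest) mlast = b := by
        rw [← hml]
        exact List.formPerm_apply_getLast b rest
      have hca : List.formPerm (a :: b :: rest) a = b :=
        List.formPerm_apply_head a b rest hnodup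
      have hcml : List.formPerm (a :: b :: rest) mlast = a := by
        have h3 := List.formPerm_apply_getLast a (b :: rest)
        rw [List.getLast_cons (List.cons_ne_nil b rest), hml] at h3
        exact h3
      have hw_eq : List.formPerm (a :: b :: rest)
          = List.formPerm (b :: rest) * Equiv.swap a mlast := by
        rw [List.formPerm_cons_cons, Equiv.mul_swap_eq_swap_mul, hc'a, hc'ml]
      set x := transl (Pi.single a 1) * finW (List.formPerm (a :: b :: rest)) with hxd
      set x' := transl (Pi.single b 1) * finW (List.formPerm (b :: rest)) with hx'd
      have heq : x = x' * rfl0 a mlast 1 := by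
        apply ext'
        · intro i
          rw [hxd, hx'd, tw_t, mul_t, tw_t]
          have hxw : (transl (Pi.single b 1) * finW (List.formPerm (b :: rest))).w⁻¹ i
              = (List.formPerm (b :: rest))⁻¹ i := by rw [tw_w]
          rw [hxw]
          have e1 : ((List.formPerm (b :: rest))⁻¹ i = a) ↔ (i = a) := by
            rw [Equiv.Perm.inv_eq_iff_eq]
            constructor
            · intro h; rw [h, hc'a]
            · intro h; rw [h, hc'a]
          have e2 : ((List.formPerm (b :: rest))⁻¹ i = mlast) ↔ (i = b) := by
            rw [Equiv.Perm.inv_eq_iff_eq]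
            constructor
            · intro h; rw [h, hc'ml]
            · intro h; rw [h, hc'ml]
          simp only [rfl0, e1, e2, Pi.single_apply]
          split_ifs <;> ring
        · intro i
          rw [hxd, hx'd, tw_w, mul_w, tw_w]
          show List.formPerm (a :: b :: rest) i = (List.formPerm (b :: rest) * Equiv.swap a mlast) i
          rw [hw_eq]
      have hxwa : x.w a = b := by rw [hxd, tw_w]; exact hca
      have hxwml : x.w mlast = a := by rw [hxd, tw_w]; exact hcml
      have hxta : x.t a = 1 := by rw [hxd, tw_t, Pi.single_apply, if_pos rfl]
      have hxtb : x.t b = 0 := by rw [hxd, tw_t, Pi.single_apply, if_neg hbna]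
      have hk' : 1 + x.t (x.w a) - x.t (x.w mlast) = 0 := by
        rw [hxwa, hxwml, hxta, hxtb]
        norm_num
      have hflr : flr x (x.w a) (x.w mlast) = -1 := by
        rw [hxwa, hxwml, flr]
        have h1 : x.w⁻¹ b = a := by rw [Equiv.Perm.inv_eq_iff_eq]; exact hxwa.symm
        have h2 : x.w⁻¹ a = mlast := by rw [Equiv.Perm.inv_eq_iff_eq]; exact hxwml.symm
        rw [h1, h2, if_neg (not_lt_of_gt hmlast_lt), hxta, hxtb]
        norm_num
      have hpq : x.w a < x.w mlast := by rw [hxwa, hxwml]; exact hab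
      have hlt : len x < len x' := by
        have hxr : x * rfl0 a mlast 1 = x' := by
          rw [heq, mul_assoc', rfl0_mul_self hmlne, mul_one']
        have h := len_lt_of_nonsep x (α := a) (β := mlast) 1 hmlne hpq
          (Or.inr ⟨by omega, by omega⟩)
        rw [hxr] at h
        exact h
      have hlast' : (b :: rest).getLast? = some mlast := by
        rw [← List.getLast?_cons_cons (a := a)]
        exact hlast
      exact Relation.ReflTransGen.head
        ⟨⟨rfl0 a mlast 1, rfl0_isrefl hmlne 1, heq⟩, hlt⟩
        (ih b mlast hch' rfl hlast')

lemma pact_swap_mu0 [NeZero d] (m₁ : Fin d) :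
    pact (Equiv.swap 0 m₁) (mu0 d) = Pi.single m₁ 1 := by
  funext i
  show (mu0 d) ((Equiv.swap 0 m₁)⁻¹ i) = _
  rw [Equiv.swap_inv, mu0, Pi.single_apply, Pi.single_apply]
  by_cases him : i = m₁
  · subst him
    rw [Equiv.swap_apply_right, if_pos rfl, if_pos rfl]
  · rw [if_neg him, if_neg (fun h => him ((Equiv.swap 0 m₁).injective
      (h.trans (Equiv.swap_apply_right 0 m₁).symm)))]

end AffW

open AffW in
/-- An element `w = t_{e_m} ⋅ w̄` of the extended affine Weyl group of `GL_d` belongs to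
the `μ₀`-admissible set, `μ₀ = (1,0,…,0)`, if and only if `w̄` is a cycle
`(m_k m_{k-1} ⋯ m_1)` with `m = m_k > m_{k-1} > ⋯ > m_1`. -/
theorem admissible_iff_decreasing_cycle (d : ℕ) [NeZero d] (m : Fin d)
    (wbar : Equiv.Perm (Fin d)) :
    transl (Pi.single m 1) * finW wbar ∈ Adm (mu0 d) ↔
      ∃ l : List (Fin d), l ≠ [] ∧ l.Chain' (· > ·) ∧ l.head? = some m ∧
        wbar = l.formPerm := by
  constructor
  · rintro ⟨σ₀, hble⟩
    have hPvt : Pv (transl (pact σ₀ (mu0 d))) := by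
      apply Pv_transl _ (σ₀ 0)
      intro i
      show (mu0 d) (σ₀⁻¹ i) = _
      rw [mu0, Pi.single_apply]
      by_cases h : i = σ₀ 0
      · rw [if_pos (show σ₀⁻¹ i = 0 by rw [h, Equiv.Perm.coe_inv, Equiv.symm_apply_apply]), if_pos h]
      · rw [if_neg (fun hc => h (by exact Equiv.Perm.inv_eq_iff_eq.mp hc)), if_neg h]
    have hPvx := Pv_of_ble hble hPvt
    obtain ⟨h1, h2⟩ := Pv_struct hPvx
    obtain ⟨l, hlne, hch, hhd, hfp⟩ := perm_decomp ((m : ℕ)) m wbar⁻¹ le_rfl h1 h2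
    exact ⟨l, hlne, hch, hhd, by rw [← hfp, inv_inv]⟩
  · rintro ⟨l, hlne, hch, hhd, rfl⟩
    obtain ⟨mlast, hml⟩ : ∃ y, l.getLast? = some y := by
      rcases l with _ | ⟨a, l'⟩
      · exact absurd rfl hlne
      · exact ⟨_, List.getLast?_eq_getLast (List.cons_ne_nil a l')⟩
    refine ⟨Equiv.swap 0 mlast, ?_⟩
    rw [pact_swap_mu0]
    exact ble_list l m mlast hch hhd hml
end
end

section
/- Let χ be a depth-zero character of T(O) and χ̃ an extension of χ to T(F). Then χ̃ extends to a character of the group N_χ(F) (the preimage of W_χ in the normalizer N(F) of T) if and only if χ̃ is W_χ-invariant. -/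
/-! The extension lemma for depth-zero characters: in the (split, type `GL_d`) model,
the normalizer of the diagonal torus `T` of `GL_d` over a `p`-adic field `F` is
`N(F) = (F^×)^d ⋊ S_d` (monomial matrices). -/

/-- An element `t ⋅ σ` of the normalizer `N(F) = (F^×)^d ⋊ S_d` of the diagonal
torus of `GL_d`. -/
@[ext]
structure NormT (d : ℕ) (F : Type*) [Field F] where
  t : Fin d → Fˣ
  σ : Equiv.Perm (Fin d)

namespace NormT

variable {d : ℕ} {F : Type*} [Field F]

instance : Mul (NormT d F) :=
  ⟨fun a b => ⟨fun i => a.t i * b.t (a.σ⁻¹ i), a.σ * b.σ⟩⟩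

end NormT

/-- The inclusion `O^× → F^×` of the units of the ring of integers. -/
noncomputable def unitsIncl {F : Type*} [Field F] (O : Subring F) : Oˣ →* Fˣ :=
  Units.map O.subtype.toMonoidHom

/-- Let `F` be a `p`-adic field with ring of integers `O`, maximal ideal `m` and
uniformizer `π` (so that every `x ∈ F^×` is uniquely `π^n·u` with `u ∈ O^×`).
Let `χ` be a depth-zero character of `T(O) = (O^×)^d` (i.e. trivial on the kernel
of `T(O) → T(k_F)`), valued in `K^×` (`K` standing for `ℚ̄_ℓ`), and let `χ̃` be an
extension of `χ` to a character of `T(F) = (F^×)^d`.  Then `χ̃` extends to a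
character of the group `N_χ(F)` (the preimage in `N(F)` of
`W_χ = { σ : ^σχ = χ }`) if and only if `χ̃` is `W_χ`-invariant. -/
theorem depth_zero_character_extension (p d : ℕ) [Fact p.Prime] [NeZero d]
    (F K : Type*) [Field F] [Field K] (O : Subring F) (m : Ideal O) (hm : m.IsMaximal)
    (π : Fˣ) (hdec : ∀ x : Fˣ, ∃! q : ℤ × Oˣ, x = π ^ q.1 * unitsIncl O q.2)
    (χ : (Fin d → Oˣ) →* Kˣ)
    (hdz : ∀ u : Fin d → Oˣ, (∀ i, ((u i : O) - 1) ∈ m) → χ u = 1)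
    (χt : (Fin d → Fˣ) →* Kˣ)
    (hext : ∀ u : Fin d → Oˣ, χt (fun i => unitsIncl O (u i)) = χ u) :
    (∃ X : NormT d F → Kˣ,
        (∀ a b : NormT d F,
          (∀ u : Fin d → Oˣ, χ (fun i => u (a.σ i)) = χ u) →
          (∀ u : Fin d → Oˣ, χ (fun i => u (b.σ i)) = χ u) →
          X (a * b) = X a * X b) ∧
        (∀ t : Fin d → Fˣ, X ⟨t, 1⟩ = χt t)) ↔
      (∀ σ : Equiv.Perm (Fin d),
        (∀ u : Fin d → Oˣ, χ (fun i => u (σ i)) = χ u) →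
        ∀ t : Fin d → Fˣ, χt (fun i => t (σ i)) = χt t) := by
  constructor
  · rintro ⟨X, hmul, hX⟩ σ hσ t
    have htriv : ∀ u : Fin d → Oˣ, χ (fun i => u ((1 : Equiv.Perm (Fin d)) i)) = χ u := by
      intro u; rfl
    have key : ∀ s : Fin d → Fˣ, χt (fun i => s (σ⁻¹ i)) = χt s := by
      intro s
      have h1 : (⟨1, σ⟩ : NormT d F) * ⟨s, 1⟩ = ⟨fun i => s (σ⁻¹ i), 1⟩ * ⟨1, σ⟩ := by
        show (⟨fun i => 1 * s (σ⁻¹ i), σ * 1⟩ : NormT d F)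
            = ⟨fun i => s (σ⁻¹ i) * 1, 1 * σ⟩
        simp
      have e1 := hmul ⟨1, σ⟩ ⟨s, 1⟩ hσ htriv
      have e2 := hmul ⟨fun i => s (σ⁻¹ i), 1⟩ ⟨1, σ⟩ htriv hσ
      rw [h1, e2, hX, hX] at e1
      exact mul_right_cancel (b := X (⟨1, σ⟩ : NormT d F)) (by rw [e1, mul_comm])
    have h2 := key (fun j => t (σ j))
    have h3 : (fun i => (fun j => t (σ j)) (σ⁻¹ i)) = t := by
      funext i; simp
    rw [h3] at h2
    exact h2.symm
  · intro hinv
    refine ⟨fun a => χt a.t, ?_, fun t => rfl⟩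
    intro a b ha hb
    show χt (fun i => a.t i * b.t (a.σ⁻¹ i)) = χt a.t * χt b.t
    have hinvσ : ∀ v : Fin d → Fˣ, χt (fun i => v (a.σ⁻¹ i)) = χt v := by
      intro v
      apply hinv
      intro u
      have := ha (fun i => u (a.σ⁻¹ i))
      simpa using this.symm
    have : (fun i => a.t i * b.t (a.σ⁻¹ i))
        = a.t * fun i => b.t (a.σ⁻¹ i) := rfl
    rw [this, map_mul, hinvσ b.t]
end
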